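/- arXiv:2604.11084 — 4 statements merged into one kernel-verified Lean document; each statement's English description precedes it below -/
import Mathlib

section
/- For positive integers a, b with 2a ≥ b, the binomial coefficient satisfies C(a+b, b) ≤ (3e)^a. -/
lemma choose_le_two_pow' (n k : ℕ) : n.choose k ≤ 2 ^ n := by
  rcases le_or_gt k n with hk | hk
  · calc n.choose k ≤ ∑ m ∈ Finset.range (n + 1), n.choose m :=
        Finset.single_le_sum (fun i _ => Nat.zero_le _)
          (Finset.mem_range.mpr (Nat.lt_succ_of_le hk))
      _ = 2 ^ n := Nat.sum_range_choose n
  · simp [Nat.choose_eq_zero_of_lt hk]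

/-- For positive integers `a, b` with `2a ≥ b`, `C(a+b, b) ≤ (3e)^a`. -/
theorem stmt7 (a b : ℕ) (ha : 0 < a) (hb : 0 < b) (h : b ≤ 2 * a) :
    ((a + b).choose b : ℝ) ≤ (3 * Real.exp 1) ^ a := by
  have h1 : ((a + b).choose b : ℝ) ≤ 2 ^ (a + b) := by
    exact_mod_cast choose_le_two_pow' (a + b) b
  have h2 : (2 : ℝ) ^ (a + b) ≤ 2 ^ (3 * a) := by
    apply pow_le_pow_right₀ (by norm_num)
    omega
  have h3 : (2 : ℝ) ^ (3 * a) = 8 ^ a := by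
    rw [pow_mul]; norm_num
  have h4 : (8 : ℝ) ≤ 3 * Real.exp 1 := by
    have := Real.exp_one_gt_d9
    nlinarith
  calc ((a + b).choose b : ℝ) ≤ 2 ^ (a + b) := h1
    _ ≤ 2 ^ (3 * a) := h2
    _ = 8 ^ a := h3
    _ ≤ (3 * Real.exp 1) ^ a := pow_le_pow_left₀ (by norm_num) h4 a
end

section
/- Let ρ̄ be a probability density on 𝕋^d and φ: 𝕋^d × 𝕋^d × 𝕋^d → ℝ a bounded measurable function such that ∫_{𝕋^{2d}} φ(x, z, z') ρ̄(z) ρ̄(z') dz dz' = 0 for all x. Let 1 ≤ l ≤ 2m and multi-indices (i_1,…,i_{2m}), (j_1,…,j_{2m}), (k_1,…,k_{2m}) in {1,…,N} satisfy: j_l ≠ k_l, and neither j_l nor k_l appears among the indices i_1,…,i_{2m}, nor among j_t (t ≠ l) or k_t (t ≠ l). Then ∫_{𝕋^{dN}} Π_{t=1}^{2m} φ(x_{i_t}, x_{j_t}, x_{k_t}) · Π_{s=1}^N ρ̄(x_s) dX = 0. -/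
/-! By the index hypotheses, the coordinates `x_{j_l}` and `x_{k_l}` enter the integrand only
through the factor `φ(x_{i_l}, x_{j_l}, x_{k_l}) ρ̄(x_{j_l}) ρ̄(x_{k_l})`, the rest being
independent of them. Integrating these two coordinates out first (Fubini on the product of
probability measures, in the form `∫ F = ∫ X, ∫ z, F (update X a z)`) therefore produces the
cancellation integral `∫∫ φ(x, z, z') ρ̄(z) ρ̄(z') dz dz' = 0` as a factor. -/

open MeasureTheory

/-- The `d`-dimensional torus `𝕋^d = [0,1]^d`. -/
abbrev Torus (d : ℕ) := Fin d → AddCircle (1 : ℝ)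

open Function Finset

instance AddCircle.isProbabilityMeasure_volume :
    IsProbabilityMeasure (volume : Measure (AddCircle (1 : ℝ))) :=
  ⟨by rw [AddCircle.measure_univ, ENNReal.ofReal_one]⟩

namespace MeasureTheory

section Update

variable {ι : Type*} [Fintype ι] [DecidableEq ι] {α : ι → Type*} [∀ i, MeasurableSpace (α i)]
  {μ : ∀ i, Measure (α i)} [∀ i, IsProbabilityMeasure (μ i)]

/-- Measure-preserving because the discarded old coordinate carries a probability measure. -/
theorem measurePreserving_update (a : ι) :
    MeasurePreserving (fun p : (∀ i, α i) × α a => update p.1 a p.2)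
      ((Measure.pi μ).prod (μ a)) (Measure.pi μ) := by
  refine ⟨measurable_update', (Measure.pi_eq fun s hs => ?_).symm⟩
  have hpre : (fun p : (∀ i, α i) × α a => update p.1 a p.2) ⁻¹' Set.univ.pi s =
      Set.univ.pi (update s a Set.univ) ×ˢ s a := by
    ext ⟨X, z⟩
    simp only [Set.mem_preimage, Set.mem_univ_pi, Set.mem_prod]
    rw [forall_update_iff (p := fun i x => x ∈ s i),
      forall_update_iff (p := fun i (t : Set (α i)) => X i ∈ t)]
    simp [and_comm]
  rw [Measure.map_apply measurable_update' (.univ_pi hs), hpre, Measure.prod_prod, Measure.pi_pi]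
  simp_rw [apply_update (fun i => μ i), prod_update_of_mem (mem_univ a), measure_univ,
    one_mul, ← erase_eq, prod_erase_mul _ _ (mem_univ a)]

variable {E : Type*} [NormedAddCommGroup E] {F : (∀ i, α i) → E}

theorem Integrable.comp_update (hF : Integrable F (Measure.pi μ)) (a : ι) :
    Integrable (fun p : (∀ i, α i) × α a => F (update p.1 a p.2)) ((Measure.pi μ).prod (μ a)) :=
  ((measurePreserving_update a).integrable_comp hF.1).mpr hF

variable [NormedSpace ℝ E]

theorem Integrable.integral_update (hF : Integrable F (Measure.pi μ)) (a : ι) :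
    Integrable (fun X => ∫ z, F (update X a z) ∂μ a) (Measure.pi μ) :=
  (hF.comp_update a).integral_prod_left

theorem integral_pi_eq_integral_integral_update (hF : Integrable F (Measure.pi μ)) (a : ι) :
    ∫ X, F X ∂Measure.pi μ = ∫ X, ∫ z, F (update X a z) ∂μ a ∂Measure.pi μ := by
  have hU := measurePreserving_update (μ := μ) a
  calc ∫ X, F X ∂Measure.pi μ = ∫ X, F X ∂((Measure.pi μ).prod (μ a)).map _ := by rw [hU.map_eq]
    _ = ∫ p : (∀ i, α i) × α a, F (update p.1 a p.2) ∂(Measure.pi μ).prod (μ a) :=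
        integral_map hU.measurable.aemeasurable (by rw [hU.map_eq]; exact hF.1)
    _ = _ := integral_prod _ (hF.comp_update a)

theorem integral_pi_eq_zero_of_integral_update_update (hF : Integrable F (Measure.pi μ))
    (a b : ι) (h : ∀ X, ∫ z, ∫ z', F (update (update X a z) b z') ∂μ b ∂μ a = 0) :
    ∫ X, F X ∂Measure.pi μ = 0 :=
  calc ∫ X, F X ∂Measure.pi μ = ∫ X, ∫ z', F (update X b z') ∂μ b ∂Measure.pi μ :=
        integral_pi_eq_integral_integral_update hF b
    _ = ∫ X, ∫ z, ∫ z', F (update (update X a z) b z') ∂μ b ∂μ a ∂Measure.pi μ :=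
        integral_pi_eq_integral_integral_update (hF.integral_update b) a
    _ = 0 := by simp only [h, integral_zero]

end Update

theorem integrable_prod_mul_prod_pi {α κ ι : Type*} [MeasurableSpace α] {μ : Measure α}
    [SigmaFinite μ] [Fintype κ] [Fintype ι] {g : κ → (ι → α) → ℝ}
    (hg : ∀ t, AEStronglyMeasurable (g t) (Measure.pi fun _ => μ)) {C : ℝ}
    (hC : ∀ t X, |g t X| ≤ C) {ρ : α → ℝ} (hρ : Integrable ρ μ) :
    Integrable (fun X => (∏ t, g t X) * ∏ s, ρ (X s)) (Measure.pi fun _ => μ) := by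
  refine (Integrable.fintype_prod fun _ => hρ).bdd_mul (c := C ^ Fintype.card κ)
    (by simpa only [← prod_fn] using aestronglyMeasurable_prod univ fun t _ => hg t)
    (.of_forall fun X => ?_)
  rw [Real.norm_eq_abs, abs_prod, ← card_univ, ← prod_const]
  exact prod_le_prod (fun _ _ => abs_nonneg _) fun t _ => hC t X

end MeasureTheory

section UpdateUpdate

variable {ι α M : Type*} [DecidableEq ι] [CommMonoid M]

theorem Fintype.prod_comp_update_update [Fintype ι] (f : α → M) (X : ι → α) {a b : ι}
    (hab : a ≠ b) (z z' : α) :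
    ∏ s, f (update (update X a z) b z' s) = f z * f z' * ∏ s ∈ (univ.erase a).erase b, f (X s) := by
  rw [← mul_prod_erase univ _ (mem_univ a),
    ← mul_prod_erase _ _ (mem_erase.2 ⟨hab.symm, mem_univ b⟩),
    update_of_ne hab, update_self, update_self, mul_assoc]
  congr 2
  refine Finset.prod_congr rfl fun s hs => ?_
  obtain ⟨hsb, hsa⟩ : s ≠ b ∧ s ≠ a := by simpa using hs
  rw [update_of_ne hsb, update_of_ne hsa]

theorem Fintype.prod_update_update_of_ne {κ : Type*} [Fintype κ] [DecidableEq κ]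
    (φ : α → α → α → M) {i j k : κ → ι} {l : κ} (hjk : j l ≠ k l)
    (hij : ∀ t, i t ≠ j l) (hik : ∀ t, i t ≠ k l)
    (hjj : ∀ t, t ≠ l → j t ≠ j l ∧ j t ≠ k l) (hkk : ∀ t, t ≠ l → k t ≠ j l ∧ k t ≠ k l)
    (X : ι → α) (z z' : α) :
    ∏ t, φ (update (update X (j l) z) (k l) z' (i t)) (update (update X (j l) z) (k l) z' (j t))
        (update (update X (j l) z) (k l) z' (k t)) =
      φ (X (i l)) z z' * ∏ t ∈ univ.erase l, φ (X (i t)) (X (j t)) (X (k t)) := by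
  have hX : ∀ s, s ≠ j l → s ≠ k l → update (update X (j l) z) (k l) z' s = X s :=
    fun s hj hk => by rw [update_of_ne hk, update_of_ne hj]
  rw [← mul_prod_erase univ _ (mem_univ l), hX _ (hij l) (hik l), update_of_ne hjk, update_self,
    update_self]
  refine congrArg _ (Finset.prod_congr rfl fun t ht => ?_)
  have htl : t ≠ l := ne_of_mem_erase ht
  rw [hX _ (hij t) (hik t), hX _ (hjj t htl).1 (hjj t htl).2, hX _ (hkk t htl).1 (hkk t htl).2]

end UpdateUpdate

theorem stmt12_general {d N m : ℕ}
    (ρ : Torus d → ℝ)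
    (hρ1 : ∫ x : Torus d, ρ x = 1)
    (φ : Torus d → Torus d → Torus d → ℝ)
    (hφmeas : Measurable fun p : Torus d × Torus d × Torus d => φ p.1 p.2.1 p.2.2)
    (C : ℝ) (hφbdd : ∀ x z z', |φ x z z'| ≤ C)
    (hcancel : ∀ x, ∫ z : Torus d, ∫ z' : Torus d, φ x z z' * (ρ z * ρ z') = 0)
    (i j k : Fin (2 * m) → Fin N) (l : Fin (2 * m))
    (hjk : j l ≠ k l)
    (hij : ∀ t, i t ≠ j l) (hik : ∀ t, i t ≠ k l)
    (hjj : ∀ t, t ≠ l → j t ≠ j l ∧ j t ≠ k l)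
    (hkk : ∀ t, t ≠ l → k t ≠ j l ∧ k t ≠ k l) :
    ∫ X : Fin N → Torus d,
      (∏ t, φ (X (i t)) (X (j t)) (X (k t))) * ∏ s, ρ (X s) = 0 := by
  have hρ : Integrable ρ := .of_integral_ne_zero (by rw [hρ1]; exact one_ne_zero)
  have hφt (t : Fin (2 * m)) :
      Measurable fun X : Fin N → Torus d => φ (X (i t)) (X (j t)) (X (k t)) :=
    hφmeas.comp (f := fun X : Fin N → Torus d => (X (i t), X (j t), X (k t))) (by fun_prop)
  have hint := integrable_prod_mul_prod_pi (fun t => (hφt t).aestronglyMeasurable)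
    (fun t X => hφbdd _ _ _) hρ
  rw [volume_pi]
  refine integral_pi_eq_zero_of_integral_update_update hint (j l) (k l) fun X => ?_
  simp_rw [Fintype.prod_update_update_of_ne φ hjk hij hik hjj hkk,
    Fintype.prod_comp_update_update ρ X hjk, mul_mul_mul_comm, integral_mul_const, hcancel,
    zero_mul]

/-- Second cancellation property: if `∫∫ φ(x,z,z') ρ̄(z) ρ̄(z') dz dz' = 0` for all `x`,
and `j_l ≠ k_l` with neither `j_l` nor `k_l` appearing among the `i`-indices nor among
the other `j`- and `k`-indices, then
`∫ Π_t φ(x_{i_t}, x_{j_t}, x_{k_t}) ρ̄^{⊗N} dX = 0`. -/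
theorem stmt12 {d N m : ℕ} (hd : 0 < d) (hN : 0 < N) (hm : 0 < m)
    (ρ : Torus d → ℝ) (hρmeas : Measurable ρ) (hρ0 : ∀ x, 0 ≤ ρ x)
    (hρ1 : ∫ x : Torus d, ρ x = 1)
    (φ : Torus d → Torus d → Torus d → ℝ)
    (hφmeas : Measurable fun p : Torus d × Torus d × Torus d => φ p.1 p.2.1 p.2.2)
    (C : ℝ) (hφbdd : ∀ x z z', |φ x z z'| ≤ C)
    (hcancel : ∀ x, ∫ z : Torus d, ∫ z' : Torus d, φ x z z' * (ρ z * ρ z') = 0)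
    (i j k : Fin (2 * m) → Fin N) (l : Fin (2 * m))
    (hjk : j l ≠ k l)
    (hij : ∀ t, i t ≠ j l) (hik : ∀ t, i t ≠ k l)
    (hjj : ∀ t, t ≠ l → j t ≠ j l ∧ j t ≠ k l)
    (hkk : ∀ t, t ≠ l → k t ≠ j l ∧ k t ≠ k l) :
    ∫ X : Fin N → Torus d,
      (∏ t, φ (X (i t)) (X (j t)) (X (k t))) * ∏ s, ρ (X s) = 0 :=
  stmt12_general ρ hρ1 φ hφmeas C hφbdd hcancel i j k l hjk hij hik hjj hkk
end

section
/- Let integers m, s, r, N satisfy 1 ≤ s ≤ m, 0 ≤ r ≤ s, and 4m ≤ N. Then N^s s^{−s} · (N−s)!/(N−(s+r))! · (s+1)(s+2)⋯(s+r) · (s+r)^{4m−2r} ≤ N^{4m} · 2^m. -/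
/-- Combinatorial estimate `T̃₁ ≤ N^{4m} 2^m`: for `1 ≤ s ≤ m`, `0 ≤ r ≤ s`, `4m ≤ N`,
`N^s s^{−s} · (N−s)!/(N−(s+r))! · (s+1)⋯(s+r) · (s+r)^{4m−2r} ≤ N^{4m} · 2^m`. -/
theorem stmt13 (m s r N : ℕ) (hs1 : 1 ≤ s) (hsm : s ≤ m) (hrs : r ≤ s) (hN : 4 * m ≤ N) :
    (N : ℝ) ^ s * ((s : ℝ)⁻¹) ^ s * ((N - s).descFactorial r : ℝ) *
        (∏ t ∈ Finset.range r, ((s : ℝ) + (t : ℝ) + 1)) * ((s : ℝ) + (r : ℝ)) ^ (4 * m - 2 * r)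
      ≤ (N : ℝ) ^ (4 * m) * 2 ^ m := by
  have hsR : (0:ℝ) < s := by exact_mod_cast hs1
  have hs0 : (s:ℝ) ≠ 0 := ne_of_gt hsR
  have hNR : (0:ℝ) ≤ N := Nat.cast_nonneg N
  set a := s - r with ha'
  set b := 4*m - s - r with hb'
  have hab : 4*m - 2*r = a + b := by omega
  have h1 : ((N-s).descFactorial r : ℝ) ≤ (N:ℝ)^r := by
    calc ((N-s).descFactorial r : ℝ) ≤ (((N-s)^r : ℕ) : ℝ) := by
          exact_mod_cast Nat.descFactorial_le_pow _ _
      _ ≤ (N:ℝ)^r := by exact_mod_cast Nat.pow_le_pow_left (Nat.sub_le _ _) r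
  have h2 : (∏ t ∈ Finset.range r, ((s:ℝ)+t+1)) ≤ (2*(s:ℝ))^r := by
    calc (∏ t ∈ Finset.range r, ((s:ℝ)+t+1)) ≤ ∏ _t ∈ Finset.range r, (2*(s:ℝ)) := by
          apply Finset.prod_le_prod
          · intro i _; positivity
          · intro i hi
            have hi' : i + 1 ≤ s := lt_of_lt_of_le (Finset.mem_range.mp hi) hrs
            have : (i:ℝ) + 1 ≤ s := by exact_mod_cast hi'
            linarith
      _ = (2*(s:ℝ))^r := by simp
  have hsr2 : (s:ℝ)+r ≤ 2*s := by
    have : (r:ℝ) ≤ s := by exact_mod_cast hrs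
    linarith
  have hsrN : (s:ℝ)+r ≤ N := by
    have : s + r ≤ N := by omega
    exact_mod_cast this
  have hsr0 : (0:ℝ) ≤ (s:ℝ)+r := by positivity
  have h3 : ((s:ℝ)+r)^(4*m-2*r) ≤ (2*(s:ℝ))^a * (N:ℝ)^b := by
    rw [hab, pow_add]
    exact mul_le_mul (pow_le_pow_left₀ hsr0 hsr2 a) (pow_le_pow_left₀ hsr0 hsrN b)
      (by positivity) (by positivity)
  have key : (N:ℝ)^s * ((s:ℝ)⁻¹)^s * (N:ℝ)^r * (2*(s:ℝ))^r * ((2*(s:ℝ))^a * (N:ℝ)^b)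
      = (N:ℝ)^(4*m) * 2^s := by
    have hb : s + r + b = 4*m := by omega
    have ha : r + a = s := by omega
    have e1 : (2*(s:ℝ))^r * (2*(s:ℝ))^a = 2^s * (s:ℝ)^s := by
      rw [← pow_add, ha, mul_pow]
    have e2 : ((s:ℝ)⁻¹)^s * (s:ℝ)^s = 1 := by
      rw [← mul_pow, inv_mul_cancel₀ hs0, one_pow]
    have e3 : (N:ℝ)^s * (N:ℝ)^r * (N:ℝ)^b = (N:ℝ)^(4*m) := by
      rw [← pow_add, ← pow_add, hb]
    calc (N:ℝ)^s * ((s:ℝ)⁻¹)^s * (N:ℝ)^r * (2*(s:ℝ))^r * ((2*(s:ℝ))^a * (N:ℝ)^b)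
        = ((N:ℝ)^s * (N:ℝ)^r * (N:ℝ)^b) * (((s:ℝ)⁻¹)^s * ((2*(s:ℝ))^r * (2*(s:ℝ))^a)) := by
          ring
      _ = (N:ℝ)^(4*m) * (2^s * (((s:ℝ)⁻¹)^s * (s:ℝ)^s)) := by rw [e1, e3]; ring
      _ = (N:ℝ)^(4*m) * 2^s := by rw [e2, mul_one]
  calc (N : ℝ) ^ s * ((s : ℝ)⁻¹) ^ s * ((N - s).descFactorial r : ℝ) *
        (∏ t ∈ Finset.range r, ((s : ℝ) + (t : ℝ) + 1)) * ((s : ℝ) + (r : ℝ)) ^ (4 * m - 2 * r)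
      ≤ (N:ℝ)^s * ((s:ℝ)⁻¹)^s * (N:ℝ)^r * (2*(s:ℝ))^r * ((2*(s:ℝ))^a * (N:ℝ)^b) := by
        have hp : (0:ℝ) ≤ ∏ t ∈ Finset.range r, ((s:ℝ)+t+1) := by
          apply Finset.prod_nonneg; intro i _; positivity
        gcongr <;> positivity
    _ = (N:ℝ)^(4*m) * 2^s := key
    _ ≤ (N:ℝ)^(4*m) * 2^m := by
        have h2m : (2:ℝ)^s ≤ 2^m := pow_le_pow_right₀ one_le_two hsm
        exact mul_le_mul_of_nonneg_left h2m (by positivity)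
end

section
/- Let integers m, s, r, N satisfy 1 ≤ s ≤ m, s < r ≤ 2m, and 4m ≤ N. Then N^s s^{−s} · (N−s)!/(N−(s+r))! · (s+1)(s+2)⋯(s+r) · (s+r)^{4m−2r} ≤ N^{4m} · 2^m. -/
/-- Combinatorial estimate `T̃₂ ≤ N^{4m} 2^m`: for `1 ≤ s ≤ m`, `s < r ≤ 2m`, `4m ≤ N`,
`N^s s^{−s} · (N−s)!/(N−(s+r))! · (s+1)⋯(s+r) · (s+r)^{4m−2r} ≤ N^{4m} · 2^m`. -/
theorem stmt14 (m s r N : ℕ) (hs1 : 1 ≤ s) (hsm : s ≤ m) (hsr : s < r) (hr2m : r ≤ 2 * m)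
    (hN : 4 * m ≤ N) :
    (N : ℝ) ^ s * ((s : ℝ)⁻¹) ^ s * ((N - s).descFactorial r : ℝ) *
        (∏ t ∈ Finset.range r, ((s : ℝ) + (t : ℝ) + 1)) * ((s : ℝ) + (r : ℝ)) ^ (4 * m - 2 * r)
      ≤ (N : ℝ) ^ (4 * m) * 2 ^ m := by
  have hs0 : (0:ℝ) < s := by exact_mod_cast hs1
  have hsrN : s + r ≤ N := by omega
  have hsrNR : (s:ℝ) + r ≤ N := by exact_mod_cast hsrN
  have hC : ((N - s).descFactorial r : ℝ) ≤ (N:ℝ)^r := by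
    exact_mod_cast le_trans (Nat.descFactorial_le_pow _ _)
      (Nat.pow_le_pow_left (Nat.sub_le _ _) _)
  have hD : ∏ t ∈ Finset.range r, ((s:ℝ) + (t:ℝ) + 1) ≤ (2*(s:ℝ))^s * (N:ℝ)^(r-s) := by
    obtain ⟨k, hk⟩ : ∃ k, r = s + k := ⟨r - s, by omega⟩
    subst hk
    rw [Finset.prod_range_add, Nat.add_sub_cancel_left]
    apply mul_le_mul _ _ (Finset.prod_nonneg fun i _ => by positivity) (by positivity)
    · calc ∏ i ∈ Finset.range s, ((s:ℝ) + i + 1)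
          ≤ ∏ _i ∈ Finset.range s, (2*(s:ℝ)) := by
            apply Finset.prod_le_prod (fun i _ => by positivity)
            intro i hi
            have : i < s := Finset.mem_range.mp hi
            have : (i:ℝ) + 1 ≤ s := by exact_mod_cast this
            linarith
        _ = (2*(s:ℝ))^s := by rw [Finset.prod_const, Finset.card_range]
    · calc ∏ i ∈ Finset.range k, ((s:ℝ) + ((s + i : ℕ):ℝ) + 1)
          ≤ ∏ _i ∈ Finset.range k, (N:ℝ) := by
            apply Finset.prod_le_prod (fun i _ => by positivity)
            intro i hi
            have hik : i < k := Finset.mem_range.mp hi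
            have : s + (s + i) + 1 ≤ N := by omega
            exact_mod_cast this
        _ = (N:ℝ)^k := by rw [Finset.prod_const, Finset.card_range]
  have hE : ((s:ℝ) + r) ^ (4*m - 2*r) ≤ (N:ℝ) ^ (4*m - 2*r) :=
    pow_le_pow_left₀ (by positivity) hsrNR _
  have hN0 : (0:ℝ) ≤ N := by positivity
  calc (N : ℝ) ^ s * ((s : ℝ)⁻¹) ^ s * ((N - s).descFactorial r : ℝ) *
        (∏ t ∈ Finset.range r, ((s : ℝ) + (t : ℝ) + 1)) * ((s : ℝ) + (r : ℝ)) ^ (4 * m - 2 * r)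
      ≤ (N:ℝ)^s * ((s:ℝ)⁻¹)^s * (N:ℝ)^r * ((2*(s:ℝ))^s * (N:ℝ)^(r-s)) * (N:ℝ)^(4*m-2*r) := by
        have hDnn : (0:ℝ) ≤ ∏ t ∈ Finset.range r, ((s:ℝ) + t + 1) :=
          Finset.prod_nonneg fun i _ => by positivity
        gcongr <;> positivity
    _ = (((s:ℝ)⁻¹)^s * (2*(s:ℝ))^s) * ((N:ℝ)^s * (N:ℝ)^r * (N:ℝ)^(r-s) * (N:ℝ)^(4*m-2*r)) := by
        ring
    _ = 2^s * (N:ℝ)^(4*m) := by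
        have h2 : ((s:ℝ)⁻¹)^s * (2*(s:ℝ))^s = 2^s := by
          rw [← mul_pow]; congr 1; field_simp
        have hNpow : (N:ℝ)^s * (N:ℝ)^r * (N:ℝ)^(r-s) * (N:ℝ)^(4*m-2*r) = (N:ℝ)^(4*m) := by
          rw [← pow_add, ← pow_add, ← pow_add]; congr 1; omega
        rw [h2, hNpow]
    _ ≤ 2^m * (N:ℝ)^(4*m) := by
        have h := pow_le_pow_right₀ (by norm_num : (1:ℝ) ≤ 2) hsm
        have hp : (0:ℝ) ≤ (N:ℝ)^(4*m) := by positivity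
        nlinarith
    _ = (N:ℝ)^(4*m) * 2^m := by ring
end
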